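/- Let H, K be Hilbert spaces and A, C : H →L[ℂ] K. If range C ⊆ range A and C ∘L A* is self-adjoint, then there exists a self-adjoint X : H →L[ℂ] H with A ∘L X = C. Moreover, X may be taken of the form D + (1 - P) ∘L D*, where D is the reduced solution of A X = C and P is the projection onto closure(range A*). -/

import Mathlib

/-!
Let `M` be the closure of the range of `A†` and `P` the orthogonal projection onto it. Since
`Mᗮ = ker A`, we have `A P = A`, so `A (1 - P) D† = 0` and `A X = A D = C`. Self-adjointness of
`C A† = A D A†` says that `D` is symmetric on the range of `A†`, hence by continuity on `M`; as `D`
maps into `M`, this makes `D P` self-adjoint. Then `P D† = (D P)† = D P`, so `X = D + D† - D P`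
is self-adjoint.
-/

open ContinuousLinearMap
open scoped InnerProductSpace InnerProduct

namespace ContinuousLinearMap

variable {𝕜 E F : Type*} [RCLike 𝕜]
  [NormedAddCommGroup E] [InnerProductSpace 𝕜 E]
  [NormedAddCommGroup F] [InnerProductSpace 𝕜 F]

def IsSymmetricOn (D : E →L[𝕜] E) (S : Set E) : Prop :=
  ∀ u ∈ S, ∀ v ∈ S, ⟪D u, v⟫_𝕜 = ⟪u, D v⟫_𝕜

theorem IsSymmetricOn.closure {D : E →L[𝕜] E} {S : Set E} (h : D.IsSymmetricOn S) :
    D.IsSymmetricOn (closure S) := by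
  intro u hu v hv
  have huv : (u, v) ∈ _root_.closure (S ×ˢ S) := by
    rw [closure_prod_eq]
    exact ⟨hu, hv⟩
  exact closure_minimal (t := {p : E × E | ⟪D p.1, p.2⟫_𝕜 = ⟪p.1, D p.2⟫_𝕜})
    (fun p hp => h p.1 hp.1 p.2 hp.2) (isClosed_eq (by fun_prop) (by fun_prop)) huv

theorem IsSymmetricOn.isSelfAdjoint_comp_starProjection [CompleteSpace E] {D : E →L[𝕜] E}
    {M : Submodule 𝕜 E} [M.HasOrthogonalProjection] (h : D.IsSymmetricOn M)
    (hDM : ∀ x, D x ∈ M) : IsSelfAdjoint (D ∘L M.starProjection) := by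
  rw [isSelfAdjoint_iff_isSymmetric]
  intro x y
  set P := M.starProjection
  have hP : ∀ z ∈ M, P z = z := fun z hz => Submodule.starProjection_eq_self_iff.mpr hz
  calc ⟪D (P x), y⟫_𝕜
      = ⟪P (D (P x)), y⟫_𝕜 := by rw [hP _ (hDM _)]
    _ = ⟪D (P x), P y⟫_𝕜 := M.inner_starProjection_left_eq_right _ _
    _ = ⟪P x, D (P y)⟫_𝕜 := h _ (M.starProjection_apply_mem x) _ (M.starProjection_apply_mem y)
    _ = ⟪x, P (D (P y))⟫_𝕜 := M.inner_starProjection_left_eq_right _ _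
    _ = ⟪x, D (P y)⟫_𝕜 := by rw [hP _ (hDM _)]

variable [CompleteSpace E] [CompleteSpace F]

theorem isSymmetricOn_range_adjoint {A : E →L[𝕜] F} {D : E →L[𝕜] E}
    (h : IsSelfAdjoint (A ∘L D ∘L A†)) : D.IsSymmetricOn (LinearMap.range (A† : F →ₗ[𝕜] E)) := by
  rintro _ ⟨y, rfl⟩ _ ⟨z, rfl⟩
  have := h.isSymmetric y z
  simp only [coe_coe, coe_comp, Function.comp_apply] at this ⊢
  rwa [adjoint_inner_right, adjoint_inner_left]

theorem comp_starProjection_closure_range_adjoint (A : E →L[𝕜] F) :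
    A ∘L (LinearMap.range (A† : F →ₗ[𝕜] E)).topologicalClosure.starProjection = A := by
  set M := (LinearMap.range (A† : F →ₗ[𝕜] E)).topologicalClosure
  have hker : Mᗮ = LinearMap.ker (A : E →ₗ[𝕜] F) := by
    rw [Submodule.orthogonal_closure, orthogonal_range, adjoint_adjoint]
  ext x
  have hx : x - M.starProjection x ∈ LinearMap.ker (A : E →ₗ[𝕜] F) :=
    hker ▸ M.sub_starProjection_mem_orthogonal x
  rw [LinearMap.mem_ker, map_sub, sub_eq_zero] at hx
  exact hx.symm

end ContinuousLinearMap

theorem hermitian_solution_sufficient_general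
    {H K : Type*} [NormedAddCommGroup H] [InnerProductSpace ℂ H] [CompleteSpace H]
    [NormedAddCommGroup K] [InnerProductSpace ℂ K] [CompleteSpace K]
    (A C : H →L[ℂ] K) (D : H →L[ℂ] H)
    (hsa : IsSelfAdjoint (C ∘L adjoint A))
    (hD1 : A ∘L D = C)
    (hD2 : (LinearMap.range (D : H →ₗ[ℂ] H) : Set H) ⊆ closure (LinearMap.range (adjoint A : K →ₗ[ℂ] H) : Set H)) :
    ∃ X : H →L[ℂ] H, IsSelfAdjoint X ∧ A ∘L X = C ∧
      X = D + (1 - ((LinearMap.range (adjoint A : K →ₗ[ℂ] H)).topologicalClosure.subtypeL ∘L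
        Submodule.orthogonalProjectionOnto (LinearMap.range (adjoint A : K →ₗ[ℂ] H)).topologicalClosure)) ∘L adjoint D := by
  set M := (LinearMap.range (adjoint A : K →ₗ[ℂ] H)).topologicalClosure
  change ∃ X, _ ∧ _ ∧ X = D + (1 - M.starProjection) ∘L adjoint D
  have hMcoe : (M : Set H) = closure (LinearMap.range (adjoint A : K →ₗ[ℂ] H)) :=
    Submodule.topologicalClosure_coe _
  have hDM : ∀ x, D x ∈ M := fun x => (hMcoe ▸ hD2 ⟨x, rfl⟩ : D x ∈ (M : Set H))
  have hDP : IsSelfAdjoint (D ∘L M.starProjection) := by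
    refine IsSymmetricOn.isSelfAdjoint_comp_starProjection ?_ hDM
    rw [hMcoe]
    exact (isSymmetricOn_range_adjoint (by rwa [← comp_assoc, hD1])).closure
  have hPD : M.starProjection ∘L adjoint D = D ∘L M.starProjection := by
    simpa [adjoint_comp, (isSelfAdjoint_starProjection M).adjoint_eq] using hDP.adjoint_eq
  refine ⟨_, ?_, ?_, rfl⟩
  · have hX : D + (1 - M.starProjection) ∘L adjoint D = (D + star D) - D ∘L M.starProjection := by
      rw [sub_comp, hPD, star_eq_adjoint, one_def, id_comp, add_sub_assoc]
    rw [hX]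
    exact (IsSelfAdjoint.add_star_self D).sub hDP
  · rw [comp_add, ← comp_assoc, comp_sub, one_def, comp_id,
      comp_starProjection_closure_range_adjoint, sub_self, zero_comp, add_zero, hD1]

theorem hermitian_solution_sufficient
    {H K : Type*} [NormedAddCommGroup H] [InnerProductSpace ℂ H] [CompleteSpace H]
    [NormedAddCommGroup K] [InnerProductSpace ℂ K] [CompleteSpace K]
    (A C : H →L[ℂ] K) (D : H →L[ℂ] H)
    (hrange : (LinearMap.range (C : H →ₗ[ℂ] K) : Set K) ⊆ (LinearMap.range (A : H →ₗ[ℂ] K) : Set K))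
    (hsa : IsSelfAdjoint (C ∘L adjoint A))
    (hD1 : A ∘L D = C)
    (hD2 : (LinearMap.range (D : H →ₗ[ℂ] H) : Set H) ⊆ closure (LinearMap.range (adjoint A : K →ₗ[ℂ] H) : Set H)) :
    ∃ X : H →L[ℂ] H, IsSelfAdjoint X ∧ A ∘L X = C ∧
      X = D + (1 - ((LinearMap.range (adjoint A : K →ₗ[ℂ] H)).topologicalClosure.subtypeL ∘L
        Submodule.orthogonalProjectionOnto (LinearMap.range (adjoint A : K →ₗ[ℂ] H)).topologicalClosure)) ∘L adjoint D :=
  hermitian_solution_sufficient_general A C D hsa hD1 hD2
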